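/- Let Q be a Borel probability measure on (0,∞), let 0 < α < p, and let λ, t > 0. Then ∫_0^∞ ∫_{(0,∞)} (e^{-s u^p} - e^{-s u^p e^{pλt}}) Q(ds) u^{-1-α} du = α^{-1} Γ(1 - α/p)(e^{λtα} - 1) ∫_{(0,∞)} s^{α/p} Q(ds), as an equality in [0,∞]; in particular both sides are finite if and only if ∫_{(0,∞)} s^{α/p} Q(ds) < ∞. -/

import Mathlib

/-!
Write `e^{-s u^p} - e^{-s c u^p} = ∫_s^{sc} u^p e^{-w u^p} dw` with `c = e^{pλt}`. After Tonelli
(twice) the `u`-integral becomes a Gamma integral, `∫_0^∞ u^{p-1-α} e^{-w u^p} du =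
p⁻¹ Γ(1 - α/p) w^{α/p - 1}`, and integrating `w^{α/p-1}` over `(s, sc]` gives
`(p/α) s^{α/p} (c^{α/p} - 1)`.
-/

open MeasureTheory Set Real

theorem ofReal_exp_neg_mul_sub_exp_neg_mul {v a b : ℝ} (hv : 0 ≤ v) (hab : a ≤ b) :
    ENNReal.ofReal (exp (-(a * v)) - exp (-(b * v)))
      = ∫⁻ w in Ioc a b, ENNReal.ofReal (v * exp (-(w * v))) := by
  have hcont : Continuous fun w : ℝ => v * exp (-(w * v)) := by fun_prop
  have hderiv (w : ℝ) : HasDerivAt (fun w : ℝ => -exp (-(w * v))) (v * exp (-(w * v))) w :=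
    (((hasDerivAt_id w).mul_const v).neg.exp.neg).congr_deriv (by simp [mul_comm])
  rw [← ofReal_integral_eq_lintegral_ofReal hcont.integrableOn_Ioc
      (ae_of_all _ fun w => by positivity), ← intervalIntegral.integral_of_le hab,
    intervalIntegral.integral_eq_sub_of_hasDerivAt (fun w _ => hderiv w)
      (hcont.intervalIntegrable a b)]
  ring_nf

theorem lintegral_rpow_mul_exp_neg_mul_rpow {p q b : ℝ} (hp : 0 < p) (hq : -1 < q) (hb : 0 < b) :
    ∫⁻ x in Ioi (0 : ℝ), ENNReal.ofReal (x ^ q * exp (-b * x ^ p))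
      = ENNReal.ofReal (b ^ (-(q + 1) / p) * (1 / p) * Gamma ((q + 1) / p)) := by
  rw [← integral_rpow_mul_exp_neg_mul_rpow hp hq hb,
    ofReal_integral_eq_lintegral_ofReal (integrableOn_rpow_mul_exp_neg_mul_rpow hq hp hb)]
  exact (ae_restrict_iff' measurableSet_Ioi).mpr
    (ae_of_all _ fun x (hx : 0 < x) => by positivity)

theorem lintegral_Ioc_rpow_sub_one {a b r : ℝ} (ha : 0 ≤ a) (hab : a ≤ b) (hr : 0 < r) :
    ∫⁻ w in Ioc a b, ENNReal.ofReal (w ^ (r - 1)) = ENNReal.ofReal ((b ^ r - a ^ r) / r) := by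
  have hr' : -1 < r - 1 := by linarith
  rw [← ofReal_integral_eq_lintegral_ofReal
      ((intervalIntegrable_iff_integrableOn_Ioc_of_le hab).1
        (intervalIntegral.intervalIntegrable_rpow' hr'))
      ((ae_restrict_iff' measurableSet_Ioc).mpr
        (ae_of_all _ fun w hw => rpow_nonneg (ha.trans hw.1.le) _)),
    ← intervalIntegral.integral_of_le hab, integral_rpow (Or.inl hr'), sub_add_cancel]

theorem lintegral_ofReal_exp_sub_exp_mul_rpow {α p c s : ℝ} (hα : 0 < α) (hαp : α < p)
    (hc : 1 ≤ c) (hs : 0 < s) :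
    ∫⁻ u in Ioi (0 : ℝ),
        ENNReal.ofReal (exp (-(s * u ^ p)) - exp (-(s * u ^ p * c))) *
          ENNReal.ofReal (u ^ (-1 - α))
      = ENNReal.ofReal (α⁻¹ * Gamma (1 - α / p) * (c ^ (α / p) - 1)) *
          ENNReal.ofReal (s ^ (α / p)) := by
  have hp : 0 < p := hα.trans hαp
  have hαp' : 0 < α / p := div_pos hα hp
  have hssc : s ≤ s * c := le_mul_of_one_le_right hs.le hc
  have hΓ : 0 < Gamma (1 - α / p) := Gamma_pos_of_pos (by rw [sub_pos, div_lt_one hp]; exact hαp)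
  have hcα : 1 ≤ c ^ (α / p) := one_le_rpow hc hαp'.le
  have hslice : ∀ u ∈ Ioi (0 : ℝ),
      ENNReal.ofReal (exp (-(s * u ^ p)) - exp (-(s * u ^ p * c))) *
          ENNReal.ofReal (u ^ (-1 - α))
        = ∫⁻ w in Ioc s (s * c), ENNReal.ofReal (u ^ (p - 1 - α) * exp (-w * u ^ p)) := by
    intro u (hu : 0 < u)
    rw [mul_right_comm, ofReal_exp_neg_mul_sub_exp_neg_mul (rpow_nonneg hu.le p) hssc,
      ← lintegral_mul_const' _ _ ENNReal.ofReal_ne_top]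
    refine lintegral_congr fun w => ?_
    rw [← ENNReal.ofReal_mul (by positivity), mul_right_comm, ← rpow_add hu, neg_mul]
    ring_nf
  have hgamma : ∀ w ∈ Ioc s (s * c),
      ∫⁻ u in Ioi (0 : ℝ), ENNReal.ofReal (u ^ (p - 1 - α) * exp (-w * u ^ p))
        = ENNReal.ofReal (p⁻¹ * Gamma (1 - α / p)) * ENNReal.ofReal (w ^ (α / p - 1)) := by
    intro w hw
    rw [lintegral_rpow_mul_exp_neg_mul_rpow hp (by linarith) (hs.trans hw.1),
      ← ENNReal.ofReal_mul (by positivity)]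
    congr 1
    field_simp
    ring_nf
  calc _ = ∫⁻ u in Ioi (0 : ℝ), ∫⁻ w in Ioc s (s * c),
          ENNReal.ofReal (u ^ (p - 1 - α) * exp (-w * u ^ p)) :=
        setLIntegral_congr_fun measurableSet_Ioi hslice
    _ = ∫⁻ w in Ioc s (s * c), ∫⁻ u in Ioi (0 : ℝ),
          ENNReal.ofReal (u ^ (p - 1 - α) * exp (-w * u ^ p)) :=
        lintegral_lintegral_swap (by fun_prop)
    _ = ∫⁻ w in Ioc s (s * c),
          ENNReal.ofReal (p⁻¹ * Gamma (1 - α / p)) * ENNReal.ofReal (w ^ (α / p - 1)) :=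
        setLIntegral_congr_fun measurableSet_Ioc hgamma
    _ = ENNReal.ofReal (p⁻¹ * Gamma (1 - α / p)) *
          ENNReal.ofReal (((s * c) ^ (α / p) - s ^ (α / p)) / (α / p)) := by
      rw [lintegral_const_mul' _ _ ENNReal.ofReal_ne_top,
        lintegral_Ioc_rpow_sub_one hs.le hssc hαp']
    _ = _ := by
      rw [← ENNReal.ofReal_mul (by positivity),
        ← ENNReal.ofReal_mul (by have := sub_nonneg.2 hcα; positivity),
        mul_rpow hs.le (by linarith)]
      congr 1
      field_simp

theorem stmt_8_general (Q : Measure ℝ) [IsProbabilityMeasure Q]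
    (α p lam t : ℝ) (hα : 0 < α) (hαp : α < p) (hlam : 0 < lam) (ht : 0 < t) :
    ∫⁻ u in Set.Ioi (0 : ℝ),
        (∫⁻ s in Set.Ioi (0 : ℝ),
            ENNReal.ofReal (Real.exp (-(s * u ^ p)) -
              Real.exp (-(s * u ^ p * Real.exp (p * lam * t)))) ∂Q) *
          ENNReal.ofReal (u ^ (-1 - α))
      = ENNReal.ofReal (α⁻¹ * Real.Gamma (1 - α / p) * (Real.exp (lam * t * α) - 1)) *
          ∫⁻ s in Set.Ioi (0 : ℝ), ENNReal.ofReal (s ^ (α / p)) ∂Q := by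
  have hc : 1 ≤ exp (p * lam * t) := one_le_exp (by have := hα.trans hαp; positivity)
  have hcα : exp (lam * t * α) = exp (p * lam * t) ^ (α / p) := by
    rw [← exp_mul]
    field_simp [(hα.trans hαp).ne']
  simp_rw [hcα, ← lintegral_mul_const' _ _ ENNReal.ofReal_ne_top]
  rw [lintegral_lintegral_swap (by fun_prop), ← lintegral_const_mul' _ _ ENNReal.ofReal_ne_top]
  exact setLIntegral_congr_fun measurableSet_Ioi fun s (hs : 0 < s) =>
    lintegral_ofReal_exp_sub_exp_mul_rpow hα hαp hc hs

/-- The normalizing-constant computation of Proposition 3: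
`∫_0^∞ ∫_{(0,∞)} (e^{-su^p} - e^{-su^p e^{pλt}}) Q(ds) u^{-1-α} du
  = α⁻¹ Γ(1-α/p)(e^{λtα} - 1) ∫_{(0,∞)} s^{α/p} Q(ds)` as an equality in `[0,∞]`. -/
theorem stmt_8 (Q : Measure ℝ) [IsProbabilityMeasure Q] (hQsupp : Q (Set.Iic 0) = 0)
    (α p lam t : ℝ) (hα : 0 < α) (hαp : α < p) (hlam : 0 < lam) (ht : 0 < t) :
    ∫⁻ u in Set.Ioi (0 : ℝ),
        (∫⁻ s in Set.Ioi (0 : ℝ),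
            ENNReal.ofReal (Real.exp (-(s * u ^ p)) -
              Real.exp (-(s * u ^ p * Real.exp (p * lam * t)))) ∂Q) *
          ENNReal.ofReal (u ^ (-1 - α))
      = ENNReal.ofReal (α⁻¹ * Real.Gamma (1 - α / p) * (Real.exp (lam * t * α) - 1)) *
          ∫⁻ s in Set.Ioi (0 : ℝ), ENNReal.ofReal (s ^ (α / p)) ∂Q :=
  stmt_8_general Q α p lam t hα hαp hlam ht
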